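/- arXiv:0707.3627 — 3 statements merged into one kernel-verified Lean document; each statement's English description precedes it below -/
import Mathlib

section
/- The q-commutative power series ring R = k_q[[x_1,…,x_n]] is a left and right noetherian integral domain (it has no zero divisors). -/
/-!
Common setup: `q`-commutative power series ring `R = k_q[[x_1,…,x_n]]` and
`q`-commutative Laurent series ring `L = k_q[[x_1^{±1},…,x_n^{±1}]]`, characterized
by their coefficient descriptions (twisted convolution multiplication).
-/

noncomputable section

/-- A multiplicatively antisymmetric `n × n` matrix over `k`:
`q_{ii} = 1` and `q_{ij} q_{ji} = 1`. -/
structure QMatrix (k : Type*) [Field k] (n : ℕ) where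
  q : Fin n → Fin n → k
  diag : ∀ i, q i i = 1
  antisym : ∀ i j, q i j * q j i = 1

namespace QMatrix

variable {k : Type*} [Field k] {n : ℕ} (Q : QMatrix k n)

lemma q_ne_zero (i j : Fin n) : Q.q i j ≠ 0 := fun h0 => by
  have h1 := Q.antisym i j
  rw [h0, zero_mul] at h1
  exact zero_ne_one h1

/-- The twisting weight `∏_{1 ≤ j < i ≤ n} q_{ij}^{u_i v_j}` (natural exponents), so that
`x^u · x^v = weight u v · x^{u+v}` in `R`. -/
def weight (u v : Fin n →₀ ℕ) : k :=
  ∏ i : Fin n, ∏ j : Fin n, if j < i then Q.q i j ^ (u i * v j) else 1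

/-- The twisting weight `∏_{1 ≤ j < i ≤ n} q_{ij}^{u_i v_j}` (integer exponents), so that
`x^u · x^v = zweight u v · x^{u+v}` in `L`. -/
def zweight (u v : Fin n → ℤ) : k :=
  ∏ i : Fin n, ∏ j : Fin n, if j < i then Q.q i j ^ (u i * v j) else 1

/-- The alternating bicharacter `σ(s,t) = ∏_{i,j} q_{ij}^{s_i t_j}`, so that
`x^s x^t = σ(s,t) x^t x^s` in `L`. -/
def sigma (s t : Fin n → ℤ) : k :=
  ∏ i : Fin n, ∏ j : Fin n, Q.q i j ^ (s i * t j)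

end QMatrix

/-- `R` is (a model of) the `q`-commutative power series ring `k_q[[x_1, …, x_n]]`:
its underlying `k`-vector space is that of all families of coefficients indexed by `ℕ^n`,
the constant series `1` is the multiplicative unit, and multiplication is given by the
twisted convolution: the coefficient of `x^s` in `f·g` is
`∑_{u+v=s} f_u g_v ∏_{1≤j<i≤n} q_{ij}^{u_i v_j}`. -/
structure IsQPowerSeriesRing {k : Type*} [Field k] {n : ℕ} (Q : QMatrix k n)
    (R : Type*) [Ring R] [Algebra k R] where
  coeff : R ≃ₗ[k] ((Fin n →₀ ℕ) → k)
  coeff_one : ∀ s, coeff 1 s = if s = 0 then 1 else 0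
  coeff_mul : ∀ f g : R, ∀ s, coeff (f * g) s =
    ∑ uv ∈ Finset.HasAntidiagonal.antidiagonal s, coeff f uv.1 * coeff g uv.2 * Q.weight uv.1 uv.2

namespace IsQPowerSeriesRing

variable {k : Type*} [Field k] {n : ℕ} {Q : QMatrix k n}
variable {R : Type*} [Ring R] [Algebra k R] (h : IsQPowerSeriesRing Q R)

/-- The monic monomial `x^s` of `R`. -/
def mono (s : Fin n →₀ ℕ) : R :=
  h.coeff.symm (fun t => if t = s then 1 else 0)

/-- The variable `x_i` of `R`. -/
def X (i : Fin n) : R := h.mono (Finsupp.single i 1)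

/-- The augmentation ideal `J = ⟨x_1, …, x_n⟩` of `R`, as a two-sided ideal. -/
def Jideal : TwoSidedIdeal R := TwoSidedIdeal.span (Set.range h.X)

/-- For `w ⊆ {1,…,n}`, the two-sided ideal `J_w = ⟨x_i : i ∈ w⟩` of `R`. -/
def Jw (w : Finset (Fin n)) : TwoSidedIdeal R :=
  TwoSidedIdeal.span {r : R | ∃ i ∈ w, r = h.X i}

/-- The action of `θ ∈ H = (kˣ)^n` on `R`, determined by
`x^s ↦ θ_1^{s_1} ⋯ θ_n^{s_n} x^s` and applied coefficientwise to series. -/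
def hAct (θ : Fin n → kˣ) (f : R) : R :=
  h.coeff.symm (fun s => (∏ i, (θ i : k) ^ (s i)) * h.coeff f s)

/-- A two-sided ideal of `R` is `H`-stable if it is mapped to itself by every element
of the torus `H = (kˣ)^n`. -/
def IsHStable (I : TwoSidedIdeal R) : Prop :=
  ∀ θ : Fin n → kˣ, h.hAct θ '' (I : Set R) = (I : Set R)

end IsQPowerSeriesRing

/-- A coefficient family `c : ℤ^n → k` is Laurent-bounded if `c s = 0` whenever some
coordinate of `s` is sufficiently negative, i.e. `∃ N, min(s_1,…,s_n) < -N → c s = 0`. -/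
def LaurentBounded {k : Type*} [Field k] {n : ℕ} (c : (Fin n → ℤ) → k) : Prop :=
  ∃ N : ℕ, ∀ s : Fin n → ℤ, (∃ i, s i < -(N : ℤ)) → c s = 0

/-- `L` is (a model of) the `q`-commutative Laurent series ring
`k_q[[x_1^{±1}, …, x_n^{±1}]]`: its elements correspond, `k`-linearly, to the
Laurent-bounded coefficient families indexed by `ℤ^n`, the constant series `1` is the
multiplicative unit, and multiplication is given by the twisted convolution. -/
structure IsQLaurentSeriesRing {k : Type*} [Field k] {n : ℕ} (Q : QMatrix k n)
    (L : Type*) [Ring L] [Algebra k L] where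
  coeff : L →ₗ[k] ((Fin n → ℤ) → k)
  coeff_injective : Function.Injective coeff
  coeff_bounded : ∀ f, LaurentBounded (coeff f)
  coeff_surjective : ∀ c, LaurentBounded c → ∃ f, coeff f = c
  coeff_one : ∀ s, coeff 1 s = if s = 0 then 1 else 0
  mul_support_finite : ∀ f g : L, ∀ s : Fin n → ℤ,
    (Function.support fun u => coeff f u * coeff g (s - u) * Q.zweight u (s - u)).Finite
  coeff_mul : ∀ f g : L, ∀ s : Fin n → ℤ, coeff (f * g) s =
    ∑ᶠ u : Fin n → ℤ, coeff f u * coeff g (s - u) * Q.zweight u (s - u)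

namespace IsQLaurentSeriesRing

variable {k : Type*} [Field k] {n : ℕ} {Q : QMatrix k n}
variable {L : Type*} [Ring L] [Algebra k L] (h : IsQLaurentSeriesRing Q L)

/-- The action of `θ ∈ H = (kˣ)^n` on `L`, determined by
`x^s ↦ θ_1^{s_1} ⋯ θ_n^{s_n} x^s` and applied coefficientwise to series. -/
def hAct (θ : Fin n → kˣ) (f : L) : L :=
  Classical.choose (h.coeff_surjective
    (fun s => (∏ i, ((θ i ^ (s i) : kˣ) : k)) * h.coeff f s)
    (by
      obtain ⟨N, hN⟩ := h.coeff_bounded f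
      exact ⟨N, fun s hs => by simp only []; rw [hN s hs, mul_zero]⟩))

/-- A two-sided ideal of `L` is `H`-stable if it is mapped to itself by every element
of the torus `H = (kˣ)^n`. -/
def IsHStable (I : TwoSidedIdeal L) : Prop :=
  ∀ θ : Fin n → kˣ, h.hAct θ '' (I : Set L) = (I : Set L)

end IsQLaurentSeriesRing

/-- A two-sided ideal `P` of a (possibly noncommutative) ring `A` is prime if `P ≠ A`
and whenever `I, J` are two-sided ideals with `IJ ⊆ P`, then `I ⊆ P` or `J ⊆ P`. -/
def IsPrimeTwoSided {A : Type*} [Ring A] (P : TwoSidedIdeal A) : Prop :=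
  P ≠ ⊤ ∧ ∀ I J : TwoSidedIdeal A, (∀ a ∈ I, ∀ b ∈ J, a * b ∈ P) → I ≤ P ∨ J ≤ P

/-!
Fix a monomial order on `ℕ^σ` (degree-lexicographic, say). Since twisting only rescales the
products of monomials by nonzero scalars, the initial exponent (the least exponent in the support)
of `f * g` is the sum of those of `f` and `g`; in particular `R` has no zero divisors.

For a left ideal `I`, Dickson's lemma gives finitely many `gᵢ ∈ I` whose initial exponents `bᵢ`
lie below every initial exponent of `I`. Any `g ∈ I` is then reduced by the division algorithm:
each step subtracts a monomial multiple of some `gᵢ` to kill the initial term of the remainder.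
Since the degree-lexicographic order has finite lower sets, the remainders and the partial
quotients converge coefficientwise, so `g = ∑ qᵢ * gᵢ` with power series `qᵢ`. The opposite ring
is again a twisted power series ring (with transposed twist), so the same argument gives right
noetherianity.
-/

open Finset MonomialOrder

theorem exists_finset_subset_forall_exists_le {α : Type*} [PartialOrder α] [WellQuasiOrderedLE α]
    (S : Set α) : ∃ B : Finset α, ↑B ⊆ S ∧ ∀ s ∈ S, ∃ b ∈ B, b ≤ s := by
  have hS := Set.isPWO_of_wellQuasiOrderedLE S
  have hmin : {x | Minimal (· ∈ S) x}.Finite :=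
    (setOfPred_minimal_antichain (· ∈ S)).finite_of_partiallyWellOrderedOn
      (hS.mono (setOfPred_minimal_subset _))
  refine ⟨hmin.toFinset, fun b hb => (hmin.mem_toFinset.mp hb).prop, fun s hs => ?_⟩
  obtain ⟨b, hbs, hb⟩ := hS.exists_le_minimal hs
  exact ⟨b, hmin.mem_toFinset.mpr hb, hbs⟩

namespace MonomialOrder

variable {σ : Type*} (m : MonomialOrder σ)

def IsInitialExp {k : Type*} [Zero k] (c : (σ →₀ ℕ) → k) (s : σ →₀ ℕ) : Prop :=
  c s ≠ 0 ∧ ∀ t, c t ≠ 0 → s ≼[m] t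

theorem exists_isInitialExp {k : Type*} [Zero k] {c : (σ →₀ ℕ) → k} (hc : c ≠ 0) :
    ∃ s, m.IsInitialExp c s := by
  obtain ⟨s₀, hs₀⟩ := Function.ne_iff.mp hc
  obtain ⟨s, hs, hmin⟩ := WellFounded.has_min (InvImage.wf m.toSyn wellFounded_lt)
    {t | c t ≠ 0} ⟨s₀, hs₀⟩
  exact ⟨s, hs, fun t ht => not_lt.mp (hmin t ht)⟩

/-- `Set.ncard` is `0` on infinite sets, so this is meaningful only when `m` has finite lower
sets. -/
def rank (s : σ →₀ ℕ) : ℕ := {t | t ≺[m] s}.ncard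

variable {m}

theorem rank_lt_rank (hfin : ∀ s, {t | t ≺[m] s}.Finite) {s t : σ →₀ ℕ} (h : s ≺[m] t) :
    m.rank s < m.rank t :=
  Set.ncard_lt_ncard ⟨fun _ hu => lt_trans hu h, fun hsub => lt_irrefl _ (hsub h)⟩ (hfin t)

theorem rank_monotone (hfin : ∀ s, {t | t ≺[m] s}.Finite) : Monotone m.rank :=
  fun _ _ h => Set.ncard_le_ncard (fun _ hu => lt_of_lt_of_le hu (m.toSyn_monotone h)) (hfin _)

theorem finite_degLex_lt [LinearOrder σ] [WellFoundedGT σ] [Finite σ] (s : σ →₀ ℕ) :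
    {t | t ≺[degLex] s}.Finite :=
  (Finsupp.finite_of_degree_le s.degree).subset fun _ ht =>
    Finsupp.DegLex.monotone_degree (le_of_lt ht)

end MonomialOrder

def VanishesBelow {σ k : Type*} [Zero k] (ord : (σ →₀ ℕ) → ℕ) (c : (σ →₀ ℕ) → k) (d : ℕ) :
    Prop :=
  ∀ s, ord s < d → c s = 0

/-- A ring whose elements are the power series `∑ cₛ xˢ`, `s ∈ ℕ^σ`, over `k`, multiplied by a
convolution twisted by a nowhere vanishing weight: `xᵘ * xᵛ = weight u v • xᵘ⁺ᵛ`. -/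
structure IsTwistedPowerSeriesRing (k σ R : Type*) [Field k] [DecidableEq σ] [Ring R] where
  coeff : R ≃+ ((σ →₀ ℕ) → k)
  weight : (σ →₀ ℕ) → (σ →₀ ℕ) → k
  weight_ne_zero : ∀ u v, weight u v ≠ 0
  coeff_mul : ∀ f g : R, ∀ s, coeff (f * g) s =
    ∑ uv ∈ antidiagonal s, coeff f uv.1 * coeff g uv.2 * weight uv.1 uv.2

namespace IsTwistedPowerSeriesRing

variable {k σ R : Type*} [Field k] [DecidableEq σ] [Ring R] (T : IsTwistedPowerSeriesRing k σ R)

def op : IsTwistedPowerSeriesRing k σ Rᵐᵒᵖ where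
  coeff := MulOpposite.opAddEquiv.symm.trans T.coeff
  weight u v := T.weight v u
  weight_ne_zero u v := T.weight_ne_zero v u
  coeff_mul f g s := by
    simp only [AddEquiv.trans_apply, MulOpposite.opAddEquiv_symm_apply, MulOpposite.unop_mul,
      T.coeff_mul]
    rw [Finsupp.sum_antidiagonal_swap s fun u v => T.coeff g.unop u * T.coeff f.unop v *
      T.weight u v]
    exact sum_congr rfl fun _ _ => by ring

theorem coeff_mul_congr_left {f f' : R} (g : R) {s : σ →₀ ℕ}
    (h : ∀ u ≤ s, T.coeff f u = T.coeff f' u) : T.coeff (f * g) s = T.coeff (f' * g) s := by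
  simp only [T.coeff_mul]
  refine sum_congr rfl fun uv huv => ?_
  rw [h uv.1 (le_of_le_of_eq le_self_add (mem_antidiagonal.mp huv))]

def monomial (t : σ →₀ ℕ) (c : k) : R := T.coeff.symm (Pi.single t c)

theorem coeff_monomial_mul (t : σ →₀ ℕ) (c : k) (f : R) (s : σ →₀ ℕ) :
    T.coeff (T.monomial t c * f) s =
      if t ≤ s then c * T.coeff f (s - t) * T.weight t (s - t) else 0 := by
  rw [T.coeff_mul]
  split_ifs with hts
  · rw [sum_eq_single_of_mem (t, s - t) (mem_antidiagonal.mpr (add_tsub_cancel_of_le hts))]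
    · simp [monomial]
    · rintro ⟨u, v⟩ huv hne
      have hut : u ≠ t := by
        rintro rfl
        exact hne (by rw [← mem_antidiagonal.mp huv, add_tsub_cancel_left])
      simp [monomial, hut]
  · refine sum_eq_zero fun uv huv => ?_
    have hut : uv.1 ≠ t := fun h => hts (h ▸ le_of_le_of_eq le_self_add (mem_antidiagonal.mp huv))
    simp [monomial, hut]

variable {m : MonomialOrder σ}

theorem coeff_mul_add_of_isInitialExp {f g : R} {s t : σ →₀ ℕ}
    (hf : m.IsInitialExp (T.coeff f) s) (hg : m.IsInitialExp (T.coeff g) t) :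
    T.coeff (f * g) (s + t) = T.coeff f s * T.coeff g t * T.weight s t := by
  rw [T.coeff_mul]
  refine sum_eq_single_of_mem (s, t) (mem_antidiagonal.mpr rfl) fun ⟨u, v⟩ huv hne => ?_
  by_contra hterm
  have hu : T.coeff f u ≠ 0 := fun h0 => hterm (by simp [h0])
  have hv : T.coeff g v ≠ 0 := fun h0 => hterm (by simp [h0])
  have huv' : m.toSyn s + m.toSyn t = m.toSyn u + m.toSyn v := by
    rw [← map_add, ← map_add, mem_antidiagonal.mp huv]
  obtain ⟨hsu, htv⟩ := (add_eq_add_iff_eq_and_eq (hf.2 u hu) (hg.2 v hv)).mp huv'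
  exact hne (by rw [m.toSyn.injective hsu, m.toSyn.injective htv])

include T in
theorem noZeroDivisors (m : MonomialOrder σ) : NoZeroDivisors R where
  eq_zero_or_eq_zero_of_mul_eq_zero {f g} hfg := by
    by_contra! h
    obtain ⟨s, hs⟩ := m.exists_isInitialExp ((map_ne_zero_iff _ T.coeff.injective).mpr h.1)
    obtain ⟨t, ht⟩ := m.exists_isInitialExp ((map_ne_zero_iff _ T.coeff.injective).mpr h.2)
    have hst := T.coeff_mul_add_of_isInitialExp hs ht
    rw [hfg, map_zero, Pi.zero_apply] at hst
    exact mul_ne_zero (mul_ne_zero hs.1 ht.1) (T.weight_ne_zero s t) hst.symm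

include T in
theorem isDomain [LinearOrder σ] [WellFoundedGT σ] : IsDomain R :=
  have : Nontrivial R := T.coeff.symm.injective.nontrivial
  have := T.noZeroDivisors degLex
  NoZeroDivisors.to_isDomain R

theorem exists_coeff_sub_monomial_mul_eq_zero {r f : R} {ℓ b t : σ →₀ ℕ}
    (hr : m.IsInitialExp (T.coeff r) ℓ) (hf : m.IsInitialExp (T.coeff f) b) (htb : t + b = ℓ) :
    ∃ c : k, ∀ s, s ≼[m] ℓ → T.coeff (r - T.monomial t c * f) s = 0 := by
  refine ⟨T.coeff r ℓ / (T.coeff f b * T.weight t b), fun s hs => ?_⟩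
  rw [map_sub, Pi.sub_apply, T.coeff_monomial_mul]
  rcases hs.lt_or_eq with hs | hs
  · have hrs : T.coeff r s = 0 := by_contra fun h => not_le.mpr hs (hr.2 s h)
    have hfs : ∀ hts : t ≤ s, T.coeff f (s - t) = 0 := fun hts => by_contra fun h => by
      refine not_le.mpr hs ?_
      rw [← htb, ← add_tsub_cancel_of_le hts, map_add, map_add]
      exact add_le_add_right (hf.2 _ h) _
    split_ifs with hts
    · simp [hrs, hfs hts]
    · simp [hrs]
  · obtain rfl := m.toSyn.injective hs
    rw [← htb, if_pos le_self_add, add_tsub_cancel_left]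
    field_simp [hf.1, T.weight_ne_zero t b]
    ring

theorem exists_reduction_step (hfin : ∀ s, {t | t ≺[m] s}.Finite) {I : Submodule R R}
    {B : Finset (σ →₀ ℕ)} {gen : (σ →₀ ℕ) → R}
    (hgen : ∀ b ∈ B, gen b ∈ I ∧ m.IsInitialExp (T.coeff (gen b)) b)
    (hB : ∀ r ∈ I, ∀ s, m.IsInitialExp (T.coeff r) s → ∃ b ∈ B, b ≤ s)
    {r : R} (hr : r ∈ I) {d : ℕ} (hd : VanishesBelow m.rank (T.coeff r) d) :
    ∃ p : (σ →₀ ℕ) → R, (∀ b u, T.coeff (p b) u ≠ 0 → d ≤ m.rank (u + b)) ∧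
      VanishesBelow m.rank (T.coeff (r - ∑ b ∈ B, p b * gen b)) (d + 1) := by
  by_cases hr0 : r = 0
  · exact ⟨0, fun b u h => absurd (by simp) h, fun s _ => by simp [hr0]⟩
  obtain ⟨ℓ, hℓ⟩ := m.exists_isInitialExp ((map_ne_zero_iff T.coeff T.coeff.injective).mpr hr0)
  obtain ⟨b₀, hb₀, hb₀ℓ⟩ := hB r hr ℓ hℓ
  obtain ⟨c, hc⟩ :=
    T.exists_coeff_sub_monomial_mul_eq_zero hℓ (hgen b₀ hb₀).2 (tsub_add_cancel_of_le hb₀ℓ)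
  have hdℓ : d ≤ m.rank ℓ := not_lt.mp fun h => hℓ.1 (hd ℓ h)
  refine ⟨fun b => if b = b₀ then T.monomial (ℓ - b₀) c else 0, fun b u hu => ?_, fun s hs => ?_⟩
  · dsimp only at hu
    split_ifs at hu with hb
    · have hu' : u = ℓ - b₀ := by_contra fun h => hu (by simp [monomial, h])
      rwa [hb, hu', tsub_add_cancel_of_le hb₀ℓ]
    · simp at hu
  · simp only [ite_mul, zero_mul, sum_ite_eq', if_pos hb₀]
    refine hc s (not_lt.mp fun hℓs => ?_)
    have := rank_lt_rank hfin hℓs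
    omega

variable {ord : (σ →₀ ℕ) → ℕ}

theorem exists_quotient_seq {I : Submodule R R} {B : Finset (σ →₀ ℕ)} {gen : (σ →₀ ℕ) → R}
    (hgen : ∀ b ∈ B, gen b ∈ I)
    (hstep : ∀ r ∈ I, ∀ d, VanishesBelow ord (T.coeff r) d → ∃ p : (σ →₀ ℕ) → R,
      (∀ b u, T.coeff (p b) u ≠ 0 → d ≤ ord (u + b)) ∧
      VanishesBelow ord (T.coeff (r - ∑ b ∈ B, p b * gen b)) (d + 1))
    {g : R} (hg : g ∈ I) :
    ∃ quo : ℕ → (σ →₀ ℕ) → R,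
      (∀ d, VanishesBelow ord (T.coeff (g - ∑ b ∈ B, quo d b * gen b)) d) ∧
      ∀ d b u, ord (u + b) < d → T.coeff (quo (d + 1) b) u = T.coeff (quo d b) u := by
  choose! p hp_ord hp_van using hstep
  let rem : ℕ → R := fun d => Nat.rec g (fun j r => r - ∑ b ∈ B, p r j b * gen b) d
  have hrem : ∀ d, rem d ∈ I ∧ VanishesBelow ord (T.coeff (rem d)) d := by
    intro d
    induction d with
    | zero => exact ⟨hg, fun _ h => absurd h (Nat.not_lt_zero _)⟩
    | succ d ih =>
      exact ⟨I.sub_mem ih.1 (I.sum_mem fun b hb => I.smul_mem _ (hgen b hb)),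
        hp_van _ ih.1 d ih.2⟩
  refine ⟨fun d b => ∑ j ∈ range d, p (rem j) j b, fun d => ?_, fun d b u hd => ?_⟩
  · suffices g - ∑ b ∈ B, (∑ j ∈ range d, p (rem j) j b) * gen b = rem d from
      this ▸ (hrem d).2
    induction d with
    | zero => simp [rem]
    | succ d ih =>
      simp only [sum_range_succ, add_mul, sum_add_distrib, ← sub_sub, ih]
      rfl
  · simp only [sum_range_succ, map_add, Pi.add_apply, add_eq_left]
    by_contra h
    exact absurd (hp_ord _ (hrem d).1 d (hrem d).2 b u h) (not_le.mpr hd)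

theorem exists_eq_sum_of_quotient_seq (hord : Monotone ord) {B : Finset (σ →₀ ℕ)}
    {gen : (σ →₀ ℕ) → R} {g : R} {quo : ℕ → (σ →₀ ℕ) → R}
    (hvan : ∀ d, VanishesBelow ord (T.coeff (g - ∑ b ∈ B, quo d b * gen b)) d)
    (hstab : ∀ d b u, ord (u + b) < d → T.coeff (quo (d + 1) b) u = T.coeff (quo d b) u) :
    ∃ q : (σ →₀ ℕ) → R, g = ∑ b ∈ B, q b * gen b := by
  -- the coefficientwise limit of `quo d b` as `d → ∞`
  set q : (σ →₀ ℕ) → R := fun b => T.coeff.symm fun u => T.coeff (quo (ord (u + b) + 1) b) u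
  have hq : ∀ b u d, ord (u + b) < d → T.coeff (quo d b) u = T.coeff (q b) u := by
    intro b u d hd
    simp only [q, AddEquiv.apply_symm_apply]
    induction d, hd using Nat.le_induction with
    | base => rfl
    | succ d hd ih => rw [hstab d b u hd, ih]
  refine ⟨q, T.coeff.injective (funext fun s => ?_)⟩
  set D := ord (s + ∑ b ∈ B, b) + 1
  have hle : ∀ b ∈ B, ∀ u ≤ s, ord (u + b) < D := fun b hb u hu => Nat.lt_succ_of_le <|
    hord (add_le_add hu (single_le_sum (f := id) (fun _ _ => _root_.zero_le) hb))
  have hs := hvan D s (Nat.lt_succ_of_le (hord le_self_add))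
  rw [map_sub, Pi.sub_apply, sub_eq_zero] at hs
  rw [hs, map_sum, map_sum, Finset.sum_apply, Finset.sum_apply]
  exact sum_congr rfl fun b hb => T.coeff_mul_congr_left _ fun u hu => hq b u D (hle b hb u hu)

include T in
theorem isNoetherianRing_of_monomialOrder [Finite σ] (m : MonomialOrder σ)
    (hfin : ∀ s, {t | t ≺[m] s}.Finite) : IsNoetherianRing R := by
  classical
  refine isNoetherian_def.mpr fun I => ?_
  obtain ⟨B, hBS, hB⟩ :=
    exists_finset_subset_forall_exists_le {s | ∃ r ∈ I, m.IsInitialExp (T.coeff r) s}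
  choose! gen hgen using fun b (hb : b ∈ B) => hBS hb
  refine ⟨B.image gen, le_antisymm ?_ fun g hg => ?_⟩
  · rw [coe_image, Submodule.span_le]
    rintro _ ⟨b, hb, rfl⟩
    exact (hgen b hb).1
  obtain ⟨quo, hvan, hstab⟩ := T.exists_quotient_seq (fun b hb => (hgen b hb).1)
    (fun r hr d hd => T.exists_reduction_step hfin hgen (fun r hr s hs => hB s ⟨r, hr, hs⟩) hr hd)
    hg
  obtain ⟨q, rfl⟩ := T.exists_eq_sum_of_quotient_seq (rank_monotone hfin) hvan hstab
  exact Submodule.sum_mem _ fun b hb =>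
    Submodule.smul_mem _ _ (Submodule.subset_span (mem_image_of_mem gen hb))

include T in
theorem isNoetherianRing [LinearOrder σ] [Finite σ] : IsNoetherianRing R :=
  T.isNoetherianRing_of_monomialOrder degLex finite_degLex_lt

end IsTwistedPowerSeriesRing

theorem QMatrix.weight_ne_zero {k : Type*} [Field k] {n : ℕ} (Q : QMatrix k n)
    (u v : Fin n →₀ ℕ) : Q.weight u v ≠ 0 :=
  prod_ne_zero_iff.mpr fun i _ => prod_ne_zero_iff.mpr fun j _ => by
    split_ifs
    exacts [pow_ne_zero _ (Q.q_ne_zero i j), one_ne_zero]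

def IsQPowerSeriesRing.toTwisted {k : Type*} [Field k] {n : ℕ} {Q : QMatrix k n}
    {R : Type*} [Ring R] [Algebra k R] (h : IsQPowerSeriesRing Q R) :
    IsTwistedPowerSeriesRing k (Fin n) R where
  coeff := h.coeff.toAddEquiv
  weight := Q.weight
  weight_ne_zero := Q.weight_ne_zero
  coeff_mul := h.coeff_mul

theorem stmt_0_general {k : Type*} [Field k] {n : ℕ} (Q : QMatrix k n)
    (R : Type*) [Ring R] [Algebra k R] (h : IsQPowerSeriesRing Q R) :
    IsNoetherianRing R ∧ IsNoetherianRing Rᵐᵒᵖ ∧ IsDomain R :=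
  ⟨h.toTwisted.isNoetherianRing, h.toTwisted.op.isNoetherianRing, h.toTwisted.isDomain⟩

/-- The `q`-commutative power series ring `R = k_q[[x_1,…,x_n]]` is a
left and right noetherian integral domain (it has no zero divisors). -/
theorem stmt_0 {k : Type*} [Field k] {n : ℕ} (hn : 0 < n) (Q : QMatrix k n)
    (R : Type*) [Ring R] [Algebra k R] (h : IsQPowerSeriesRing Q R) :
    IsNoetherianRing R ∧ IsNoetherianRing Rᵐᵒᵖ ∧ IsDomain R :=
  stmt_0_general Q R h

end
end

section
/- Every right ideal of R = k_q[[x_1,…,x_n]] is closed in the J-adic topology: if I is a right ideal of R and a ∈ R is such that for every m ∈ ℕ there exists r ∈ I with a − r ∈ J^m, then a ∈ I. -/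
/-!
Common setup: `q`-commutative power series ring `R = k_q[[x_1,…,x_n]]` and
`q`-commutative Laurent series ring `L = k_q[[x_1^{±1},…,x_n^{±1}]]`, characterized
by their coefficient descriptions (twisted convolution multiplication).
-/

noncomputable section

/-- The product of two two-sided ideals: the two-sided ideal generated by products. -/
def tsMul {A : Type*} [Ring A] (I J : TwoSidedIdeal A) : TwoSidedIdeal A :=
  TwoSidedIdeal.span {x : A | ∃ a ∈ I, ∃ b ∈ J, x = a * b}

/-- Powers `I^m` of a two-sided ideal (with `I^0 = A`). -/
def tsPow {A : Type*} [Ring A] (I : TwoSidedIdeal A) : ℕ → TwoSidedIdeal A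
  | 0 => ⊤
  | m + 1 => tsMul (tsPow I m) I

/-!
Order exponents by `degLex`, a well-order compatible with addition in which every exponent has
only finitely many predecessors. By Dickson's lemma there are finitely many `g_b ∈ I` whose initial
exponents `b` lie componentwise below the initial exponent of every element of `I`. An element of
the closure of `I` has the same initial exponent as some element of `I`, so subtracting a suitable
`g_b · c x^t` raises its initial exponent. Iterating from `a`, the initial exponents tend to
infinity, so the subtracted terms sum coefficientwise to `a`; grouping them by `b` writes
`a = ∑_b g_b H_b`, which lies in the right ideal `I`.
-/

open Filter Topology MonomialOrder Finset.HasAntidiagonal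
open scoped MonomialOrder

theorem Finsupp.finite_setOf_degLex_le {σ : Type*} [LinearOrder σ] [Finite σ] (v : σ →₀ ℕ) :
    {t : σ →₀ ℕ | t ≼[degLex] v}.Finite :=
  (Finsupp.finite_of_degree_le v.degree).subset fun _ ht => Finsupp.DegLex.monotone_degree ht

theorem Finsupp.eventually_degLex_lt_of_strictMono {σ : Type*} [LinearOrder σ] [Finite σ]
    {s : ℕ → σ →₀ ℕ} (hs : StrictMono (degLex.toSyn ∘ s)) (v : σ →₀ ℕ) :
    ∀ᶠ j in atTop, v ≺[degLex] s j := by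
  have hfin : {j | s j ≼[degLex] v}.Finite :=
    (Finsupp.finite_setOf_degLex_le v).preimage (hs.injective.of_comp.injOn)
  rw [← Nat.cofinite_eq_atTop]
  filter_upwards [hfin.eventually_cofinite_notMem] with j hj
  exact not_le.mp hj

theorem exists_finset_forall_exists_le {α : Type*} [PartialOrder α] [WellQuasiOrderedLE α]
    (S : Set α) : ∃ B : Finset α, ↑B ⊆ S ∧ ∀ x ∈ S, ∃ b ∈ B, b ≤ x := by
  have hfin : {x | Minimal (· ∈ S) x}.Finite :=
    (setOfPred_minimal_antichain _).finite_of_wellQuasiOrdered wellQuasiOrdered_le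
  refine ⟨hfin.toFinset, fun x hx => (hfin.mem_toFinset.mp hx).prop, fun x hx => ?_⟩
  obtain ⟨b, hbx, hb⟩ := (Set.isPWO_of_wellQuasiOrderedLE S).exists_le_minimal hx
  exact ⟨b, hfin.mem_toFinset.mpr hb, hbx⟩

theorem hasSum_sub_succ_of_eventually_eq_zero {G : Type*} [AddCommGroup G] [TopologicalSpace G]
    {f : ℕ → G} (hf : ∀ᶠ j in atTop, f j = 0) : HasSum (fun j => f j - f (j + 1)) (f 0) := by
  obtain ⟨K, hK⟩ := eventually_atTop.mp hf
  have hK' : ∀ j ∉ Finset.range K, f j - f (j + 1) = 0 := fun j hj => by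
    rw [Finset.mem_range, not_lt] at hj
    rw [hK j hj, hK (j + 1) (by omega), sub_zero]
  have hsum := hasSum_sum_of_ne_finset_zero (L := .unconditional ℕ) hK'
  rwa [Finset.sum_range_sub', hK K le_rfl, sub_zero] at hsum

theorem summable_of_eventually_eq_zero {G : Type*} [AddCommMonoid G] [TopologicalSpace G]
    {f : ℕ → G} (hf : ∀ᶠ j in atTop, f j = 0) : Summable f := by
  obtain ⟨K, hK⟩ := eventually_atTop.mp hf
  exact summable_of_ne_finset_zero (s := Finset.range K) fun j hj =>
    hK j (not_lt.mp (Finset.mem_range.not.mp hj))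

theorem AddSubgroup.mem_of_hasSum_mul {R ι β : Type*} [Ring R] [TopologicalSpace R]
    [IsTopologicalRing R] [T2Space R] {I : AddSubgroup R} (hI : ∀ x ∈ I, ∀ r : R, x * r ∈ I)
    {B : Finset β} {g : β → R} (hg : ∀ c ∈ B, g c ∈ I) {b : ι → β} (hb : ∀ j, b j ∈ B)
    {m : ι → R} (hm : ∀ c ∈ B, Summable ({j | b j = c}.indicator m)) {a : R}
    (ha : HasSum (fun j => g (b j) * m j) a) : a ∈ I := by
  classical
  have hsum : HasSum (fun j => ∑ c ∈ B, g c * {j | b j = c}.indicator m j)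
      (∑ c ∈ B, g c * ∑' j, {j | b j = c}.indicator m j) :=
    hasSum_sum fun c hc => (hm c hc).hasSum.mul_left (g c)
  have hterm : ∀ j, ∑ c ∈ B, g c * {j | b j = c}.indicator m j = g (b j) * m j := fun j => by
    simp [Set.indicator_apply, mul_ite, hb j]
  rw [ha.unique (by simpa only [hterm] using hsum)]
  exact I.sum_mem fun c hc => hI _ (hg c hc) _

namespace QMatrix

variable {k : Type*} [Field k] {n : ℕ} (Q : QMatrix k n)

theorem weight_ne_zero_s2 (u v : Fin n →₀ ℕ) : Q.weight u v ≠ 0 :=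
  Finset.prod_ne_zero_iff.mpr fun i _ => Finset.prod_ne_zero_iff.mpr fun j _ => by
    split_ifs
    exacts [pow_ne_zero _ (Q.q_ne_zero i j), one_ne_zero]

end QMatrix

namespace IsQPowerSeriesRing

variable {k : Type*} [Field k] {n : ℕ} {Q : QMatrix k n}
variable {R : Type*} [Ring R] [Algebra k R] (h : IsQPowerSeriesRing Q R)

theorem coeff_mono (s t : Fin n →₀ ℕ) : h.coeff (h.mono s) t = if t = s then 1 else 0 := by
  rw [mono, LinearEquiv.apply_symm_apply]

theorem coeff_mul_smul_mono (f : R) (c : k) (t u : Fin n →₀ ℕ) :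
    h.coeff (f * c • h.mono t) u =
      if t ≤ u then h.coeff f (u - t) * c * Q.weight (u - t) t else 0 := by
  have hterm : ∀ p ∈ antidiagonal u,
      h.coeff f p.1 * h.coeff (c • h.mono t) p.2 * Q.weight p.1 p.2 =
        if p.2 = t then h.coeff f p.1 * c * Q.weight p.1 p.2 else 0 := fun p _ => by
    rw [map_smul, Pi.smul_apply, coeff_mono, smul_eq_mul]
    split_ifs <;> ring
  rw [h.coeff_mul, Finset.sum_congr rfl hterm, ← Finset.sum_filter,
    Finset.sum_congr (filter_snd_eq_antidiagonal u t) fun _ _ => rfl]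
  split_ifs <;> simp

theorem coeff_mul_eq_zero_of_degree_lt {f g : R} {d e : ℕ}
    (hf : ∀ s : Fin n →₀ ℕ, s.degree < d → h.coeff f s = 0)
    (hg : ∀ s : Fin n →₀ ℕ, s.degree < e → h.coeff g s = 0)
    (s : Fin n →₀ ℕ) (hs : s.degree < d + e) : h.coeff (f * g) s = 0 := by
  rw [h.coeff_mul]
  refine Finset.sum_eq_zero fun p hp => ?_
  have hdeg : p.1.degree + p.2.degree = s.degree := by
    rw [← map_add, mem_antidiagonal.mp hp]
  rcases lt_or_ge p.1.degree d with h1 | h1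
  · rw [hf _ h1, zero_mul, zero_mul]
  · rw [hg _ (by omega), mul_zero, zero_mul]

def orderIdeal (d : ℕ) : TwoSidedIdeal R :=
  TwoSidedIdeal.mk' {f | ∀ s : Fin n →₀ ℕ, s.degree < d → h.coeff f s = 0}
    (by simp) (fun hf hg s hs => by simp [hf s hs, hg s hs]) (fun hf s hs => by simp [hf s hs])
    (fun hg s hs => h.coeff_mul_eq_zero_of_degree_lt (d := 0) (by simp) hg s (by simpa))
    (fun hf s hs => h.coeff_mul_eq_zero_of_degree_lt (e := 0) hf (by simp) s hs)

theorem mem_orderIdeal {d : ℕ} {f : R} :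
    f ∈ h.orderIdeal d ↔ ∀ s : Fin n →₀ ℕ, s.degree < d → h.coeff f s = 0 :=
  TwoSidedIdeal.mem_mk' ..

theorem Jideal_le_orderIdeal_one : h.Jideal ≤ h.orderIdeal 1 := by
  rw [Jideal, TwoSidedIdeal.span_le]
  rintro _ ⟨i, rfl⟩
  rw [SetLike.mem_coe, mem_orderIdeal]
  intro s hs
  rw [Nat.lt_one_iff, Finsupp.degree_eq_zero_iff] at hs
  rw [X, coeff_mono, if_neg (by simp [hs, eq_comm])]

theorem tsMul_le_orderIdeal {I₁ I₂ : TwoSidedIdeal R} {d e : ℕ} (h₁ : I₁ ≤ h.orderIdeal d)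
    (h₂ : I₂ ≤ h.orderIdeal e) : tsMul I₁ I₂ ≤ h.orderIdeal (d + e) := by
  rw [tsMul, TwoSidedIdeal.span_le]
  rintro _ ⟨f, hf, g, hg, rfl⟩
  exact h.mem_orderIdeal.mpr <| h.coeff_mul_eq_zero_of_degree_lt
    (h.mem_orderIdeal.mp (h₁ hf)) (h.mem_orderIdeal.mp (h₂ hg))

theorem tsPow_Jideal_le_orderIdeal (d : ℕ) : tsPow h.Jideal d ≤ h.orderIdeal d := by
  induction d with
  | zero => exact fun _ _ => h.mem_orderIdeal.mpr fun _ hs => absurd hs (Nat.not_lt_zero _)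
  | succ d ih => exact h.tsMul_le_orderIdeal ih h.Jideal_le_orderIdeal_one

def orderClosure (I : AddSubgroup R) : AddSubgroup R where
  carrier := {f | ∀ d, ∃ r ∈ I, f - r ∈ h.orderIdeal d}
  zero_mem' d := ⟨0, I.zero_mem, by simp⟩
  add_mem' {f g} hf hg d := by
    obtain ⟨r, hr, hfr⟩ := hf d
    obtain ⟨r', hr', hgr⟩ := hg d
    refine ⟨r + r', I.add_mem hr hr', ?_⟩
    convert (h.orderIdeal d).add_mem hfr hgr using 1
    abel
  neg_mem' {f} hf d := by
    obtain ⟨r, hr, hfr⟩ := hf d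
    refine ⟨-r, I.neg_mem hr, ?_⟩
    convert (h.orderIdeal d).neg_mem hfr using 1
    abel

theorem le_orderClosure (I : AddSubgroup R) : I ≤ h.orderClosure I :=
  fun r hr d => ⟨r, hr, by simp⟩

def IsInitialExp (f : R) (s : Fin n →₀ ℕ) : Prop :=
  h.coeff f s ≠ 0 ∧ ∀ t, t ≺[degLex] s → h.coeff f t = 0

theorem exists_isInitialExp {f : R} (hf : f ≠ 0) : ∃ s, h.IsInitialExp f s := by
  obtain ⟨t, ht⟩ := Function.ne_iff.mp ((LinearEquiv.map_ne_zero_iff h.coeff).mpr hf)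
  obtain ⟨s, hs, hmin⟩ := (InvImage.wf degLex.toSyn wellFounded_lt).has_min
    {t | h.coeff f t ≠ 0} ⟨t, ht⟩
  exact ⟨s, hs, fun t hts => by_contra fun ht => hmin t ht hts⟩

variable {h} in
theorem IsInitialExp.degLex_lt {f : R} {s s' : Fin n →₀ ℕ} (hs : h.IsInitialExp f s)
    (hs' : ∀ t, t ≼[degLex] s' → h.coeff f t = 0) : s' ≺[degLex] s :=
  not_le.mp fun hle => hs.1 (hs' s hle)

variable {h} in
theorem IsInitialExp.exists_mem_of_mem_orderClosure {I : AddSubgroup R} {f : R}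
    (hf : f ∈ h.orderClosure I) {s : Fin n →₀ ℕ} (hs : h.IsInitialExp f s) :
    ∃ g ∈ I, h.IsInitialExp g s := by
  obtain ⟨r, hr, hfr⟩ := hf (s.degree + 1)
  have hcoeff : ∀ t, t ≼[degLex] s → h.coeff r t = h.coeff f t := fun t ht => by
    have := h.mem_orderIdeal.mp hfr t (Nat.lt_succ_of_le (Finsupp.DegLex.monotone_degree ht))
    rw [map_sub, Pi.sub_apply, sub_eq_zero] at this
    exact this.symm
  refine ⟨r, hr, by rw [hcoeff s le_rfl]; exact hs.1, fun t ht => ?_⟩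
  rw [hcoeff t ht.le]
  exact hs.2 t ht

theorem exists_standardBasis (I : AddSubgroup R) :
    ∃ (B : Finset (Fin n →₀ ℕ)) (g : (Fin n →₀ ℕ) → R), (∀ b, g b ∈ I) ∧
      (∀ b ∈ B, h.IsInitialExp (g b) b) ∧
      ∀ f ∈ I, ∀ s, h.IsInitialExp f s → ∃ b ∈ B, b ≤ s := by
  classical
  obtain ⟨B, hBE, hB⟩ := exists_finset_forall_exists_le {s | ∃ g ∈ I, h.IsInitialExp g s}
  have hg : ∀ b, ∃ g ∈ I, b ∈ B → h.IsInitialExp g b := fun b =>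
    if hb : b ∈ B then (hBE hb).imp fun _ hg => ⟨hg.1, fun _ => hg.2⟩
    else ⟨0, I.zero_mem, fun hb' => absurd hb' hb⟩
  choose g hgI hg using hg
  exact ⟨B, g, hgI, hg, fun f hf s hs => hB s ⟨f, hf, hs⟩⟩

theorem exists_cancel_initialExp {F g : R} {s b : Fin n →₀ ℕ} (hF : h.IsInitialExp F s)
    (hg : h.IsInitialExp g b) (hbs : b ≤ s) :
    ∃ c : k, ∀ u, u ≼[degLex] s → h.coeff (F - g * c • h.mono (s - b)) u = 0 := by
  have hbs' : b + (s - b) = s := add_tsub_cancel_of_le hbs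
  refine ⟨h.coeff F s / (h.coeff g b * Q.weight b (s - b)), fun u hu => ?_⟩
  rw [map_sub, Pi.sub_apply, coeff_mul_smul_mono]
  rcases hu.lt_or_eq with hu | hu
  · rw [hF.2 u hu, zero_sub, neg_eq_zero]
    split_ifs with htu
    · rw [hg.2 (u - (s - b)), zero_mul, zero_mul]
      rw [← hbs', ← tsub_add_cancel_of_le htu, map_add, map_add] at hu
      exact lt_of_add_lt_add_right hu
    · rfl
  · rw [degLex.toSyn.injective hu, if_pos tsub_le_self, tsub_tsub_cancel_of_le hbs]
    field_simp [hg.1, Q.weight_ne_zero_s2]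
    ring

theorem exists_reduction {I : AddSubgroup R} {B : Finset (Fin n →₀ ℕ)} {g : (Fin n →₀ ℕ) → R}
    (hgB : ∀ b ∈ B, h.IsInitialExp (g b) b)
    (hB : ∀ f ∈ I, ∀ s, h.IsInitialExp f s → ∃ b ∈ B, b ≤ s)
    {F : R} (hF : F ∈ h.orderClosure I) (hF0 : F ≠ 0) :
    ∃ s, ∃ b ∈ B, ∃ m : R, h.IsInitialExp F s ∧
      (∀ u, u ≼[degLex] s → h.coeff (F - g b * m) u = 0) ∧
      ∀ u, h.coeff m u ≠ 0 → b + u = s := by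
  obtain ⟨s, hs⟩ := h.exists_isInitialExp hF0
  obtain ⟨f, hf, hfs⟩ := hs.exists_mem_of_mem_orderClosure hF
  obtain ⟨b, hb, hbs⟩ := hB f hf s hfs
  obtain ⟨c, hc⟩ := h.exists_cancel_initialExp hs (hgB b hb) hbs
  refine ⟨s, b, hb, c • h.mono (s - b), hs, hc, fun u hu => ?_⟩
  rw [map_smul, Pi.smul_apply, coeff_mono] at hu
  rw [show u = s - b by by_contra hne; simp [hne] at hu, add_tsub_cancel_of_le hbs]

section Topology

variable [TopologicalSpace k] [TopologicalSpace R] {h} (hτ : IsInducing h.coeff)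
include hτ

theorem hasSum_iff_coeff {ι : Type*} {f : ι → R} {a : R} :
    HasSum f a ↔ ∀ u, HasSum (fun j => h.coeff (f j) u) (h.coeff a u) := by
  rw [← hτ.hasSum_iff, Pi.hasSum]
  rfl

theorem summable_of_eventually_coeff_eq_zero {f : ℕ → R}
    (hf : ∀ u, ∀ᶠ j in atTop, h.coeff (f j) u = 0) : Summable f :=
  ⟨h.coeff.symm fun u => ∑' j, h.coeff (f j) u, (hasSum_iff_coeff hτ).mpr fun u => by
    simpa using (summable_of_eventually_eq_zero (hf u)).hasSum⟩

theorem isTopologicalRing [IsTopologicalRing k] : IsTopologicalRing R :=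
  have hcoeff (u : Fin n →₀ ℕ) : Continuous fun f : R => h.coeff f u :=
    (continuous_apply u).comp hτ.continuous
  { continuous_add := hτ.continuous_iff.mpr <| continuous_pi fun u => by
      simp only [Function.comp_def, map_add, Pi.add_apply]
      exact ((hcoeff u).comp continuous_fst).add ((hcoeff u).comp continuous_snd)
    continuous_mul := hτ.continuous_iff.mpr <| continuous_pi fun u => by
      simp only [Function.comp_def, h.coeff_mul]
      exact continuous_finsetSum _ fun p _ =>
        (((hcoeff p.1).comp continuous_fst).mul ((hcoeff p.2).comp continuous_snd)).mul
          continuous_const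
    continuous_neg := hτ.continuous_iff.mpr <| continuous_pi fun u => by
      simp only [Function.comp_def, map_neg, Pi.neg_apply]
      exact (hcoeff u).neg }

theorem t2Space [T2Space k] : T2Space R :=
  IsEmbedding.t2Space ⟨hτ, h.coeff.injective⟩

end Topology

theorem mem_of_infinite_reduction {I : AddSubgroup R} (hI : ∀ x ∈ I, ∀ r : R, x * r ∈ I)
    {B : Finset (Fin n →₀ ℕ)} {g : (Fin n →₀ ℕ) → R} (hg : ∀ c ∈ B, g c ∈ I)
    {F m : ℕ → R} {s b : ℕ → Fin n →₀ ℕ} (hF : ∀ j, F (j + 1) = F j - g (b j) * m j)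
    (hs : ∀ j, h.IsInitialExp (F j) (s j))
    (hcancel : ∀ j u, u ≼[degLex] s j → h.coeff (F (j + 1)) u = 0) (hb : ∀ j, b j ∈ B)
    (hm : ∀ j u, h.coeff (m j) u ≠ 0 → b j + u = s j) : F 0 ∈ I := by
  let _ : TopologicalSpace k := ⊥
  have _ : DiscreteTopology k := ⟨rfl⟩
  let _ : TopologicalSpace R := .induced h.coeff inferInstance
  have hτ : IsInducing h.coeff := ⟨rfl⟩
  have _ := isTopologicalRing hτ
  have _ := t2Space hτ
  have hlt (v : Fin n →₀ ℕ) : ∀ᶠ j in atTop, v ≺[degLex] s j :=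
    Finsupp.eventually_degLex_lt_of_strictMono
      (strictMono_nat_of_lt_succ fun j => (hs (j + 1)).degLex_lt (hcancel j)) v
  refine AddSubgroup.mem_of_hasSum_mul (m := m) hI hg hb (fun c _ =>
    summable_of_eventually_coeff_eq_zero hτ fun u => ?_) ((hasSum_iff_coeff hτ).mpr fun u => ?_)
  · filter_upwards [hlt (c + u)] with j hj
    rw [Set.indicator_apply]
    split_ifs with hbj
    · by_contra hne
      rw [← show b j = c from hbj, hm j u hne] at hj
      exact lt_irrefl _ hj
    · simp
  · have hsum := hasSum_sub_succ_of_eventually_eq_zero (f := fun j => h.coeff (F j) u) <| by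
      filter_upwards [hlt u] with j hj using (hs j).2 u hj
    simpa [hF] using hsum

theorem mem_of_mem_orderClosure {I : AddSubgroup R} (hI : ∀ x ∈ I, ∀ r : R, x * r ∈ I)
    {a : R} (ha : a ∈ h.orderClosure I) : a ∈ I := by
  obtain ⟨B, g, hgI, hgB, hB⟩ := h.exists_standardBasis I
  choose! s b hb m hs hcancel hm using
    fun F (hF : F ∈ h.orderClosure I) hF0 => h.exists_reduction hgB hB hF hF0
  set F : ℕ → R := fun j => (fun x => x - g (b x) * m x)^[j] a
  have hF (j : ℕ) : F (j + 1) = F j - g (b (F j)) * m (F j) :=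
    Function.iterate_succ_apply' _ _ _
  have hdiff (j : ℕ) : a - F j ∈ I := by
    induction j with
    | zero => simp [F]
    | succ j ih =>
      rw [hF, ← sub_add]
      exact I.add_mem ih (hI _ (hgI _) _)
  have hFC (j : ℕ) : F j ∈ h.orderClosure I := by
    simpa using (h.orderClosure I).sub_mem ha (h.le_orderClosure I (hdiff j))
  by_cases hz : ∃ j, F j = 0
  · obtain ⟨j, hj⟩ := hz
    simpa [hj] using hdiff j
  · have hF0 (j : ℕ) : F j ≠ 0 := not_exists.mp hz j
    refine h.mem_of_infinite_reduction hI (fun c _ => hgI c) hF (fun j => hs _ (hFC j) (hF0 j))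
      (fun j => ?_) (fun j => hb _ (hFC j) (hF0 j)) (fun j => hm _ (hFC j) (hF0 j))
    rw [hF]
    exact hcancel _ (hFC j) (hF0 j)

end IsQPowerSeriesRing

theorem stmt_2_general {k : Type*} [Field k] {n : ℕ} (Q : QMatrix k n)
    (R : Type*) [Ring R] [Algebra k R] (h : IsQPowerSeriesRing Q R)
    (I : AddSubgroup R) (hIr : ∀ a ∈ I, ∀ r : R, a * r ∈ I)
    (a : R) (ha : ∀ m : ℕ, ∃ r ∈ I, a - r ∈ tsPow h.Jideal m) :
    a ∈ I :=
  h.mem_of_mem_orderClosure hIr fun d =>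
    (ha d).imp fun _ ⟨hr, hd⟩ => ⟨hr, h.tsPow_Jideal_le_orderIdeal d hd⟩

/-- Every right ideal of `R = k_q[[x_1,…,x_n]]` is closed in the
`J`-adic topology: if `I` is a right ideal of `R` and `a ∈ R` is such that for every
`m ∈ ℕ` there exists `r ∈ I` with `a − r ∈ J^m`, then `a ∈ I`. -/
theorem stmt_2 {k : Type*} [Field k] {n : ℕ} (hn : 0 < n) (Q : QMatrix k n)
    (R : Type*) [Ring R] [Algebra k R] (h : IsQPowerSeriesRing Q R)
    (I : AddSubgroup R) (hIr : ∀ a ∈ I, ∀ r : R, a * r ∈ I)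
    (a : R) (ha : ∀ m : ℕ, ∃ r ∈ I, a - r ∈ tsPow h.Jideal m) :
    a ∈ I :=
  stmt_2_general Q R h I hIr a ha
end
end

section
/- An element f = Σ_{s∈ℤ^n} c_s x^s of L is central if and only if c_s = 0 for every s ∉ S; that is, the center Z of L consists exactly of those Laurent series supported on the subgroup S. -/
/-!
Common setup: `q`-commutative power series ring `R = k_q[[x_1,…,x_n]]` and
`q`-commutative Laurent series ring `L = k_q[[x_1^{±1},…,x_n^{±1}]]`, characterized
by their coefficient descriptions (twisted convolution multiplication).
-/

noncomputable section

/-!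
Writing `x^s x^t = zweight s t · x^{s+t}`, the two twistings of a product are related by
`zweight s t = σ(s,t) · zweight t s`. Comparing the coefficient of `x^{s+t}` in `f x^t` and
`x^t f` shows that a central `f` can have `c_s ≠ 0` only if `σ(s,t) = 1` for all `t`.
Conversely, if `f` is supported on `S`, the twisted convolutions defining `f g` and `g f`
agree term by term after the substitution `u ↦ s - u`.
-/

namespace QMatrix

variable {k : Type*} [Field k] {n : ℕ} (Q : QMatrix k n)

lemma zweight_ne_zero (u v : Fin n → ℤ) : Q.zweight u v ≠ 0 := by
  refine Finset.prod_ne_zero_iff.mpr fun i _ => Finset.prod_ne_zero_iff.mpr fun j _ => ?_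
  split
  · exact zpow_ne_zero _ (Q.q_ne_zero i j)
  · exact one_ne_zero

lemma sigma_mul_zweight (s t : Fin n → ℤ) : Q.sigma s t * Q.zweight t s = Q.zweight s t := by
  rw [zweight, Finset.prod_comm, sigma, zweight, ← Finset.prod_mul_distrib]
  refine Finset.prod_congr rfl fun i _ => ?_
  rw [← Finset.prod_mul_distrib]
  refine Finset.prod_congr rfl fun j _ => ?_
  rcases lt_trichotomy i j with hij | rfl | hji
  · rw [if_pos hij, if_neg hij.not_gt, mul_comm (t j), ← mul_zpow, Q.antisym, one_zpow]
  · simp [Q.diag]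
  · rw [if_neg hji.not_gt, if_pos hji, mul_one]

lemma zweight_eq_comm_iff (s t : Fin n → ℤ) :
    Q.zweight s t = Q.zweight t s ↔ Q.sigma s t = 1 := by
  rw [← Q.sigma_mul_zweight s t, mul_eq_right₀ (Q.zweight_ne_zero t s)]

end QMatrix

lemma laurentBounded_single {k : Type*} [Field k] {n : ℕ} (t : Fin n → ℤ) (a : k) :
    LaurentBounded (Pi.single t a) := by
  refine ⟨∑ i, (t i).natAbs, fun s ⟨i, hi⟩ => ?_⟩
  rw [Pi.single_apply, if_neg]
  rintro rfl
  have hle : (s i).natAbs ≤ ∑ j, (s j).natAbs :=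
    Finset.single_le_sum (f := fun j => (s j).natAbs) (fun _ _ => Nat.zero_le _)
      (Finset.mem_univ i)
  omega

namespace IsQLaurentSeriesRing

variable {k : Type*} [Field k] {n : ℕ} {Q : QMatrix k n}
variable {L : Type*} [Ring L] [Algebra k L] (h : IsQLaurentSeriesRing Q L)

lemma exists_coeff_eq_single (t : Fin n → ℤ) : ∃ g : L, h.coeff g = Pi.single t 1 :=
  h.coeff_surjective _ (laurentBounded_single t 1)

lemma coeff_mul_monomial {f g : L} {t : Fin n → ℤ} (hg : h.coeff g = Pi.single t 1)
    (s : Fin n → ℤ) : h.coeff (f * g) (s + t) = h.coeff f s * Q.zweight s t := by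
  rw [h.coeff_mul, finsum_eq_single _ s fun u hu => ?_]
  · simp [hg]
  · rw [hg, Pi.single_eq_of_ne (fun hut => hu ?_), mul_zero, zero_mul]
    rwa [sub_eq_iff_eq_add, add_comm, add_right_inj, eq_comm] at hut

lemma coeff_monomial_mul {f g : L} {t : Fin n → ℤ} (hg : h.coeff g = Pi.single t 1)
    (s : Fin n → ℤ) : h.coeff (g * f) (s + t) = h.coeff f s * Q.zweight t s := by
  rw [h.coeff_mul, finsum_eq_single _ t fun u hu => ?_]
  · simp [hg]
  · rw [hg, Pi.single_eq_of_ne hu, zero_mul, zero_mul]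

lemma sigma_eq_one_of_mem_center {f : L} (hf : f ∈ Subring.center L) {s : Fin n → ℤ}
    (hs : h.coeff f s ≠ 0) (t : Fin n → ℤ) : Q.sigma s t = 1 := by
  obtain ⟨g, hg⟩ := h.exists_coeff_eq_single t
  have hfg : h.coeff f s * Q.zweight s t = h.coeff f s * Q.zweight t s := by
    rw [← h.coeff_mul_monomial hg, ← h.coeff_monomial_mul hg, Subring.mem_center_iff.mp hf g]
  exact (Q.zweight_eq_comm_iff s t).mp (mul_left_cancel₀ hs hfg)

lemma mem_center_of_sigma_eq_one {f : L}
    (hf : ∀ s, h.coeff f s ≠ 0 → ∀ t, Q.sigma s t = 1) : f ∈ Subring.center L := by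
  refine Subring.mem_center_iff.mpr fun g => h.coeff_injective <| funext fun s => ?_
  rw [h.coeff_mul, h.coeff_mul, ← finsum_comp_equiv (Equiv.subLeft s)]
  refine finsum_congr fun u => ?_
  simp only [Equiv.subLeft_apply, sub_sub_cancel]
  by_cases hu : h.coeff f u = 0
  · simp [hu]
  · rw [(Q.zweight_eq_comm_iff u (s - u)).mpr (hf u hu (s - u))]
    ring

theorem mem_center_iff (f : L) :
    f ∈ Subring.center L ↔ ∀ s, h.coeff f s ≠ 0 → ∀ t, Q.sigma s t = 1 :=
  ⟨fun hf _ hs => h.sigma_eq_one_of_mem_center hf hs, h.mem_center_of_sigma_eq_one⟩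

end IsQLaurentSeriesRing

theorem stmt_4_general {k : Type*} [Field k] {n : ℕ} (Q : QMatrix k n)
    (L : Type*) [Ring L] [Algebra k L] (h : IsQLaurentSeriesRing Q L) :
    ∀ f : L, f ∈ Subring.center L ↔
      ∀ s : Fin n → ℤ, ¬ (∀ t : Fin n → ℤ, Q.sigma s t = 1) → h.coeff f s = 0 := by
  intro f
  rw [h.mem_center_iff]
  exact forall_congr' fun s => not_imp_comm

/-- An element `f = Σ_{s∈ℤ^n} c_s x^s` of `L` is central iff `c_s = 0`
for every `s ∉ S`, where `S = {s : σ(s,t) = 1 for all t}`; that is, the center `Z` of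
`L` consists exactly of those Laurent series supported on the subgroup `S`. -/
theorem stmt_4 {k : Type*} [Field k] {n : ℕ} (hn : 0 < n) (Q : QMatrix k n)
    (L : Type*) [Ring L] [Algebra k L] (h : IsQLaurentSeriesRing Q L) :
    ∀ f : L, f ∈ Subring.center L ↔
      ∀ s : Fin n → ℤ, ¬ (∀ t : Fin n → ℤ, Q.sigma s t = 1) → h.coeff f s = 0 :=
  stmt_4_general Q L h

end
end
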